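/- arXiv:1912.07292 — 5 statements merged into one kernel-verified Lean document; each statement's English description precedes it below -/
import Mathlib

section
/- Let p1, p2 ∈ (1,∞) and let μ be the measure on [-1,1] with density f(x) = C x^{-1/p1} for 0 < x ≤ 1 and f(x) = C(-x)^{1/p2} for -1 ≤ x ≤ 0 (C > 0 a normalizing constant). Then there is a constant c > 0 such that for all sufficiently small R > 0 and r ∈ (0, R/2), μ(B(-r, R)) / μ(B(-r, r)) ≥ c · R^{1 - 1/p1} / r^{1 + 1/p2}. -/
/-!
On `B(-r, R)` the density is at least `C R^{-1/p1}` on the interval `(0, R - r)`, of length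
at least `R / 2`, while on `B(-r, r) ⊆ (-2r, 0)` it is at most `C (2r)^{1/p2}`. Hence the ratio
of the two measures is at least `R^{1-1/p1} / (8 r^{1+1/p2})`.
-/

open MeasureTheory Set ENNReal

section ConstantBounds

variable {α : Type*} [MeasurableSpace α] {μ : Measure α} {s : Set α} {f : α → ℝ} {a : ℝ}

theorem ofReal_mul_measure_le_setLIntegral (hs : MeasurableSet s) (h : ∀ x ∈ s, a ≤ f x) :
    ENNReal.ofReal a * μ s ≤ ∫⁻ x in s, ENNReal.ofReal (f x) ∂μ :=
  calc ENNReal.ofReal a * μ s = ∫⁻ _ in s, ENNReal.ofReal a ∂μ :=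
        (setLIntegral_const _ _).symm
    _ ≤ _ := setLIntegral_mono' hs fun x hx ↦ ENNReal.ofReal_le_ofReal (h x hx)

theorem setLIntegral_le_ofReal_mul_measure (hs : MeasurableSet s) (h : ∀ x ∈ s, f x ≤ a) :
    ∫⁻ x in s, ENNReal.ofReal (f x) ∂μ ≤ ENNReal.ofReal a * μ s :=
  calc ∫⁻ x in s, ENNReal.ofReal (f x) ∂μ ≤ ∫⁻ _ in s, ENNReal.ofReal a ∂μ :=
        setLIntegral_mono' hs fun x hx ↦ ENNReal.ofReal_le_ofReal (h x hx)
    _ = ENNReal.ofReal a * μ s := setLIntegral_const _ _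

end ConstantBounds

section SharpExample

variable {p1 p2 C R r : ℝ} {f : ℝ → ℝ}

theorem ofReal_le_lintegral_large_ball (hp1 : 0 ≤ p1) (hC : 0 ≤ C)
    (hf_pos : ∀ x : ℝ, 0 < x → x ≤ 1 → f x = C * x ^ (-(1 / p1)))
    (hR : 0 ≤ R) (hR1 : R ≤ 1) (hr : 0 ≤ r) :
    ENNReal.ofReal (C * R ^ (-(1 / p1)) * (R - r)) ≤
      ∫⁻ y in Ioo (-r - R) (-r + R) ∩ Icc (-1:ℝ) 1, ENNReal.ofReal (f y) := by
  have hsub : Ioo 0 (R - r) ⊆ Ioo (-r - R) (-r + R) ∩ Icc (-1:ℝ) 1 := fun y ⟨hy0, hyR⟩ ↦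
    ⟨⟨by linarith, by linarith⟩, by linarith, by linarith⟩
  have hdensity : ∀ y ∈ Ioo 0 (R - r), C * R ^ (-(1 / p1)) ≤ f y :=
    fun y ⟨hy0, hyR⟩ ↦ by
      rw [hf_pos y hy0 (by linarith)]
      exact mul_le_mul_of_nonneg_left
        (Real.rpow_le_rpow_of_nonpos hy0 (by linarith) (neg_nonpos.mpr (by positivity))) hC
  calc ENNReal.ofReal (C * R ^ (-(1 / p1)) * (R - r))
      ≤ ENNReal.ofReal (C * R ^ (-(1 / p1))) * volume (Ioo 0 (R - r)) := by
        rw [Real.volume_Ioo, sub_zero, ENNReal.ofReal_mul (by positivity)]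
    _ ≤ ∫⁻ y in Ioo 0 (R - r), ENNReal.ofReal (f y) :=
        ofReal_mul_measure_le_setLIntegral measurableSet_Ioo hdensity
    _ ≤ _ := lintegral_mono_set hsub

theorem lintegral_small_ball_le_ofReal (hp2 : 0 ≤ p2) (hC : 0 ≤ C)
    (hf_neg : ∀ x : ℝ, -1 ≤ x → x ≤ 0 → f x = C * (-x) ^ (1 / p2)) (hr : 0 ≤ r) :
    ∫⁻ y in Ioo (-r - r) (-r + r) ∩ Icc (-1:ℝ) 1, ENNReal.ofReal (f y) ≤
      ENNReal.ofReal (C * (2 * r) ^ (1 / p2) * (2 * r)) := by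
  have hdensity :
      ∀ y ∈ Ioo (-r - r) (-r + r) ∩ Icc (-1:ℝ) 1, f y ≤ C * (2 * r) ^ (1 / p2) :=
    fun y ⟨⟨hyl, hyr⟩, hy1, _⟩ ↦ by
      rw [hf_neg y hy1 (by linarith)]
      gcongr <;> linarith
  calc ∫⁻ y in Ioo (-r - r) (-r + r) ∩ Icc (-1:ℝ) 1, ENNReal.ofReal (f y)
      ≤ ENNReal.ofReal (C * (2 * r) ^ (1 / p2)) *
          volume (Ioo (-r - r) (-r + r) ∩ Icc (-1:ℝ) 1) :=
        setLIntegral_le_ofReal_mul_measure (measurableSet_Ioo.inter measurableSet_Icc) hdensity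
    _ ≤ ENNReal.ofReal (C * (2 * r) ^ (1 / p2)) * volume (Ioo (-r - r) (-r + r)) := by
        gcongr
        exact inter_subset_left
    _ = ENNReal.ofReal (C * (2 * r) ^ (1 / p2) * (2 * r)) := by
        rw [Real.volume_Ioo, show -r + r - (-r - r) = 2 * r by ring,
          ← ENNReal.ofReal_mul (by positivity)]

theorem rpow_ratio_le_density_bound_ratio (hp2 : 1 ≤ p2) (hC : 0 < C)
    (hr : 0 < r) (hrR : r < R / 2) :
    1 / 8 * R ^ (1 - 1 / p1) / r ^ (1 + 1 / p2) ≤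
      C * R ^ (-(1 / p1)) * (R - r) / (C * (2 * r) ^ (1 / p2) * (2 * r)) := by
  have hR : 0 < R := by linarith
  have htwo : (2:ℝ) ^ (1 / p2) ≤ 2 := by
    simpa using Real.rpow_le_rpow_of_exponent_le one_le_two
      ((div_le_one (by linarith)).mpr hp2)
  have hratio : (2:ℝ) ^ (1 / p2) * R ≤ 4 * (R - r) := by nlinarith
  have hK : 0 < C * R ^ (-(1 / p1)) * r ^ (1 / p2) * r := by positivity
  rw [show R ^ (1 - 1 / p1) = R * R ^ (-(1 / p1)) by
        rw [sub_eq_add_neg, Real.rpow_add hR, Real.rpow_one],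
      Real.rpow_add hr, Real.rpow_one, Real.mul_rpow zero_le_two hr.le,
      div_le_div_iff₀ (by positivity) (by positivity)]
  nlinarith [mul_le_mul_of_nonneg_left hratio hK.le]

end SharpExample

/-- For the measure with density `f(x) = C x^{-1/p1}` on `(0,1]` and `C(-x)^{1/p2}` on
`[-1,0]`, the ratio of the measures of balls centred at `-r` of radii `R` and `r` is at
least `c · R^{1-1/p1} / r^{1+1/p2}`. -/
theorem sharp_example_assouad_lower_bound (p1 p2 : ℝ) (hp1 : 1 < p1) (hp2 : 1 < p2)
    (C : ℝ) (hC : 0 < C)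
    (f : ℝ → ℝ)
    (hf_pos : ∀ x : ℝ, 0 < x → x ≤ 1 → f x = C * x ^ (-(1 / p1)))
    (hf_neg : ∀ x : ℝ, -1 ≤ x → x ≤ 0 → f x = C * (-x) ^ (1 / p2)) :
    ∃ c : ℝ, 0 < c ∧ ∃ R0 : ℝ, 0 < R0 ∧
      ∀ R : ℝ, 0 < R → R < R0 → ∀ r : ℝ, 0 < r → r < R / 2 →
        ENNReal.ofReal (c * R ^ (1 - 1 / p1) / r ^ (1 + 1 / p2)) ≤
          (∫⁻ y in Ioo (-r - R) (-r + R) ∩ Icc (-1:ℝ) 1, ENNReal.ofReal (f y)) /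
            (∫⁻ y in Ioo (-r - r) (-r + r) ∩ Icc (-1:ℝ) 1, ENNReal.ofReal (f y)) := by
  refine ⟨1 / 8, by norm_num, 1, one_pos, fun R hR hR1 r hr hrR ↦ ?_⟩
  calc ENNReal.ofReal (1 / 8 * R ^ (1 - 1 / p1) / r ^ (1 + 1 / p2))
      ≤ ENNReal.ofReal (C * R ^ (-(1 / p1)) * (R - r) / (C * (2 * r) ^ (1 / p2) * (2 * r))) :=
        ENNReal.ofReal_le_ofReal
          (rpow_ratio_le_density_bound_ratio hp2.le hC hr hrR)
    _ = ENNReal.ofReal (C * R ^ (-(1 / p1)) * (R - r)) /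
          ENNReal.ofReal (C * (2 * r) ^ (1 / p2) * (2 * r)) :=
        ENNReal.ofReal_div_of_pos (by positivity)
    _ ≤ _ := ENNReal.div_le_div
        (ofReal_le_lintegral_large_ball (by linarith) hC.le hf_pos hR.le hR1.le hr.le)
        (lintegral_small_ball_le_ofReal (by linarith) hC.le hf_neg hr.le)
end

section
/- The measure μ on [-1,1] with density f(x) = C x^{-1/p1} (0 < x ≤ 1), f(x) = C(-x)^{1/p2} (-1 ≤ x ≤ 0), for p1, p2 ∈ (1,∞), is not doubling: for every constant K there exist x in the support of μ and 0 < r < R with μ(B(x,R)) > K (R/r) μ(B(x,r)). -/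
open MeasureTheory Set ENNReal Filter Topology

/-!
Take `x = -δ`, `r = δ`, `R = 2δ`. The small ball `(-2δ, 0)` lies where the density vanishes
like `(-x)^{1/p2}`, so its mass is at most `C (2δ)^{1/p2} · 2δ`, while the big ball contains
`(0, δ)`, where the density is at least `C`, so its mass is at least `C δ`. The ratio of the two
masses is at least `(2δ)^{-1/p2} / 2`, which exceeds `2K` once `δ` is small.
-/

lemma exists_pos_le_one_mul_rpow_lt_one (c : ℝ) {a : ℝ} (ha : 0 < a) :
    ∃ δ : ℝ, 0 < δ ∧ δ ≤ 1 ∧ c * (2 * δ) ^ a < 1 := by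
  have hcont : ContinuousAt (fun δ : ℝ => c * (2 * δ) ^ a) 0 :=
    continuousAt_const.mul <| (Real.continuousAt_rpow_const _ a (Or.inr ha.le)).comp
      (continuousAt_const.mul continuousAt_id)
  have hlim : Tendsto (fun δ : ℝ => c * (2 * δ) ^ a) (𝓝[>] 0) (𝓝 0) := by
    simpa [Real.zero_rpow ha.ne'] using hcont.tendsto.mono_left nhdsWithin_le_nhds
  obtain ⟨δ, hlt, hδ0, hδ1⟩ :=
    ((hlim.eventually (gt_mem_nhds one_pos)).and (Ioc_mem_nhdsGT one_pos)).exists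
  exact ⟨δ, hδ0, hδ1, hlt⟩

section PowerDensity

variable {C a : ℝ} {f : ℝ → ℝ}

lemma setLIntegral_Ioo_neg_inter_le (hC : 0 ≤ C) (ha : 0 ≤ a)
    (hf : ∀ x : ℝ, -1 ≤ x → x ≤ 0 → f x = C * (-x) ^ a) (t : ℝ) :
    ∫⁻ y in Ioo (-t) 0 ∩ Icc (-1 : ℝ) 1, ENNReal.ofReal (f y) ≤
      ENNReal.ofReal (C * t ^ a) * ENNReal.ofReal t := by
  have hbound : ∀ y ∈ Ioo (-t) 0 ∩ Icc (-1 : ℝ) 1,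
      ENNReal.ofReal (f y) ≤ ENNReal.ofReal (C * t ^ a) := by
    rintro y ⟨⟨hty, hy0⟩, hy1, -⟩
    rw [hf y hy1 hy0.le]
    gcongr
    · linarith
    · linarith
  calc ∫⁻ y in Ioo (-t) 0 ∩ Icc (-1 : ℝ) 1, ENNReal.ofReal (f y)
      ≤ ∫⁻ _ in Ioo (-t) 0 ∩ Icc (-1 : ℝ) 1, ENNReal.ofReal (C * t ^ a) :=
        setLIntegral_mono' (measurableSet_Ioo.inter measurableSet_Icc) hbound
    _ = ENNReal.ofReal (C * t ^ a) * volume (Ioo (-t) 0 ∩ Icc (-1 : ℝ) 1) :=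
        setLIntegral_const _ _
    _ ≤ ENNReal.ofReal (C * t ^ a) * ENNReal.ofReal t := by
        gcongr
        calc volume (Ioo (-t) 0 ∩ Icc (-1 : ℝ) 1) ≤ volume (Ioo (-t) 0) :=
              measure_mono inter_subset_left
          _ = ENNReal.ofReal t := by rw [Real.volume_Ioo, sub_neg_eq_add, zero_add]

lemma ofReal_mul_le_setLIntegral_Ioo_zero (hC : 0 ≤ C) (ha : 0 ≤ a)
    (hf : ∀ x : ℝ, 0 < x → x ≤ 1 → f x = C * x ^ (-a)) {δ : ℝ} (hδ : δ ≤ 1) :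
    ENNReal.ofReal (C * δ) ≤ ∫⁻ y in Ioo 0 δ, ENNReal.ofReal (f y) := by
  have hbound : ∀ y ∈ Ioo 0 δ, ENNReal.ofReal C ≤ ENNReal.ofReal (f y) := by
    rintro y ⟨hy0, hyδ⟩
    rw [hf y hy0 (by linarith)]
    gcongr
    exact le_mul_of_one_le_right hC
      (Real.one_le_rpow_of_pos_of_le_one_of_nonpos hy0 (by linarith) (neg_nonpos.2 ha))
  calc ENNReal.ofReal (C * δ) = ∫⁻ _ in Ioo 0 δ, ENNReal.ofReal C := by
        rw [setLIntegral_const, Real.volume_Ioo, sub_zero, ENNReal.ofReal_mul hC]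
    _ ≤ ∫⁻ y in Ioo 0 δ, ENNReal.ofReal (f y) := setLIntegral_mono' measurableSet_Ioo hbound

end PowerDensity

/-- The measure with density `f(x) = C x^{-1/p1}` on `(0,1]` and `C(-x)^{1/p2}` on
`[-1,0]` is not doubling: for every `K` there are `x` in the support and `0 < r < R` with
`μ(B(x,R)) > K (R/r) μ(B(x,r))`. -/
theorem sharp_example_not_doubling (p1 p2 : ℝ) (hp1 : 1 < p1) (hp2 : 1 < p2)
    (C : ℝ) (hC : 0 < C)
    (f : ℝ → ℝ)
    (hf_pos : ∀ x : ℝ, 0 < x → x ≤ 1 → f x = C * x ^ (-(1 / p1)))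
    (hf_neg : ∀ x : ℝ, -1 ≤ x → x ≤ 0 → f x = C * (-x) ^ (1 / p2)) :
    ∀ K : ℝ, ∃ x ∈ Icc (-1:ℝ) 1, ∃ r R : ℝ, 0 < r ∧ r < R ∧
      ENNReal.ofReal (K * (R / r)) *
          (∫⁻ y in Ioo (x - r) (x + r) ∩ Icc (-1:ℝ) 1, ENNReal.ofReal (f y)) <
        ∫⁻ y in Ioo (x - R) (x + R) ∩ Icc (-1:ℝ) 1, ENNReal.ofReal (f y) := by
  intro K
  obtain ⟨δ, hδ0, hδ1, hsmall⟩ :=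
    exists_pos_le_one_mul_rpow_lt_one (4 * K) (one_div_pos.2 (zero_lt_one.trans hp2))
  refine ⟨-δ, ⟨by linarith, by linarith⟩, δ, 2 * δ, hδ0, by linarith, ?_⟩
  have hball : Ioo (-δ - δ) (-δ + δ) = Ioo (-(2 * δ)) 0 := by congr 1 <;> ring
  have hsub : Ioo 0 δ ⊆ Ioo (-δ - 2 * δ) (-δ + 2 * δ) ∩ Icc (-1 : ℝ) 1 :=
    fun y ⟨hy0, hyδ⟩ => ⟨⟨by linarith, by linarith⟩, by linarith, by linarith⟩
  calc ENNReal.ofReal (K * (2 * δ / δ)) *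
        ∫⁻ y in Ioo (-δ - δ) (-δ + δ) ∩ Icc (-1 : ℝ) 1, ENNReal.ofReal (f y)
      ≤ ENNReal.ofReal (K * 2) *
          (ENNReal.ofReal (C * (2 * δ) ^ (1 / p2)) * ENNReal.ofReal (2 * δ)) := by
        rw [mul_div_cancel_right₀ _ hδ0.ne', hball]
        gcongr
        exact setLIntegral_Ioo_neg_inter_le hC.le (by positivity) hf_neg _
    _ = ENNReal.ofReal (4 * K * (2 * δ) ^ (1 / p2) * (C * δ)) := by
        rw [← ENNReal.ofReal_mul (by positivity), ← ENNReal.ofReal_mul' (by positivity)]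
        ring_nf
    _ < ENNReal.ofReal (C * δ) :=
        (ENNReal.ofReal_lt_ofReal_iff (by positivity)).2
          (mul_lt_of_lt_one_left (by positivity) hsmall)
    _ ≤ ∫⁻ y in Ioo 0 δ, ENNReal.ofReal (f y) :=
        ofReal_mul_le_setLIntegral_Ioo_zero hC.le (by positivity) hf_pos hδ1
    _ ≤ _ := lintegral_mono_set hsub
end

section
/- With f_p as above (p ∈ (1, 3/2]), ∫_0^1 f_p(x)^p dx = ∞. In particular the probability measure with density f_p is not in L^p. -/
/-! On the `k`-th ball `f^p` is the constant `2^{-p} (2^k/k)^{p/(p-1)}` and the ball has length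
`2 (k 2^{-pk})^{1/(p-1)}`, so the ball contributes exactly `2^{1-p}/k` to the integral. For
`p ≤ 3/2` the radius is at most a quarter of the centre `2^{-k}`, so the balls are pairwise
disjoint and lie in `[0, 1]`, and the integral dominates a multiple of the harmonic series. -/

open MeasureTheory Set ENNReal Function

theorem tsum_mul_measure_le_setLIntegral {ι α : Type*} [Countable ι] [MeasurableSpace α]
    {μ : Measure α} {f : α → ℝ≥0∞} {S : ι → Set α} {s : Set α} {v : ι → ℝ≥0∞}
    (hS : ∀ i, MeasurableSet (S i)) (hdisj : Pairwise (Disjoint on S)) (hsub : ∀ i, S i ⊆ s)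
    (hf : ∀ i, EqOn f (fun _ ↦ v i) (S i)) :
    ∑' i, v i * μ (S i) ≤ ∫⁻ x in s, f x ∂μ :=
  calc ∑' i, v i * μ (S i) = ∑' i, ∫⁻ x in S i, f x ∂μ := by
        refine tsum_congr fun i ↦ ?_
        rw [setLIntegral_congr_fun (hS i) (hf i), setLIntegral_const]
    _ = ∫⁻ x in ⋃ i, S i, f x ∂μ := (lintegral_iUnion hS hdisj f).symm
    _ ≤ ∫⁻ x in s, f x ∂μ := lintegral_mono_set (iUnion_subset hsub)

theorem tsum_ofReal_div_natCast_succ_eq_top {c : ℝ} (hc : 0 < c) :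
    ∑' n : ℕ, ENNReal.ofReal (c / ((n + 1 : ℕ) : ℝ)) = ∞ := by
  by_contra h
  have hsum : Summable fun n : ℕ ↦ c / ((n + 1 : ℕ) : ℝ) :=
    (ENNReal.summable_toReal h).congr fun n ↦ toReal_ofReal (by positivity)
  rw [summable_nat_add_iff 1 (f := fun k : ℕ ↦ c / (k : ℝ))] at hsum
  simp_rw [div_eq_mul_inv] at hsum
  exact Real.not_summable_natCast_inv ((summable_mul_left_iff hc.ne').mp hsum)

noncomputable def fpRadius (p : ℝ) (k : ℕ) : ℝ :=
  ((k : ℝ) * (2 : ℝ) ^ (-(p * k))) ^ (1 / (p - 1))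

noncomputable def fpHeight (p : ℝ) (k : ℕ) : ℝ :=
  1 / 2 * ((2 : ℝ) ^ (k : ℝ) / k) ^ (1 / (p - 1))

noncomputable def fpBall (p : ℝ) (k : ℕ) : Set ℝ :=
  Metric.ball ((2 : ℝ) ^ (-(k : ℝ))) (fpRadius p k)

theorem fpBall_eq_Ioo (p : ℝ) (k : ℕ) :
    fpBall p k = Ioo ((2 : ℝ) ^ (-(k : ℝ)) - fpRadius p k) ((2 : ℝ) ^ (-(k : ℝ)) + fpRadius p k) :=
  Real.ball_eq_Ioo _ _

theorem natCast_le_two_rpow_sub_one (k : ℕ) : (k : ℝ) ≤ 2 ^ ((k : ℝ) - 1) := by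
  rw [Real.rpow_sub_one two_ne_zero, Real.rpow_natCast, le_div_iff₀ two_pos, mul_comm]
  exact_mod_cast Nat.mul_le_pow (by norm_num) k

theorem fpRadius_le {p : ℝ} (hp : 1 < p) (hp' : p ≤ 3 / 2) (k : ℕ) :
    fpRadius p k ≤ (2 : ℝ) ^ (-(k : ℝ)) / 4 := by
  have hp1 : 0 < p - 1 := by linarith
  have hquarter : (2 : ℝ) ^ (-(k : ℝ)) / 4 = 2 ^ (-(k : ℝ) - 2) := by
    rw [Real.rpow_sub two_pos]; norm_num
  rw [fpRadius, one_div, Real.rpow_inv_le_iff_of_pos (by positivity) (by positivity) hp1,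
    hquarter, ← Real.rpow_mul zero_le_two]
  calc (k : ℝ) * 2 ^ (-(p * k)) ≤ 2 ^ ((k : ℝ) - 2 * (p - 1)) * 2 ^ (-(p * k)) := by
        gcongr
        exact (natCast_le_two_rpow_sub_one k).trans
          (Real.rpow_le_rpow_of_exponent_le one_le_two (by linarith))
    _ = 2 ^ ((-(k : ℝ) - 2) * (p - 1)) := by
        rw [← Real.rpow_add two_pos]; ring_nf

theorem pairwise_disjoint_fpBall {p : ℝ} (hp : 1 < p) (hp' : p ≤ 3 / 2) :
    Pairwise (Disjoint on fpBall p) := by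
  refine (pairwise_disjoint_on _).2 fun i j hij ↦ Metric.ball_disjoint_ball ?_
  have hj : (2 : ℝ) ^ (-(j : ℝ)) ≤ 2 ^ (-(i : ℝ)) / 2 := by
    rw [← Real.rpow_sub_one two_ne_zero]
    apply Real.rpow_le_rpow_of_exponent_le one_le_two
    have : (i : ℝ) + 1 ≤ j := by exact_mod_cast hij
    linarith
  have hj0 := Real.rpow_pos_of_pos two_pos (-(j : ℝ))
  rw [Real.dist_eq, abs_of_nonneg (by linarith)]
  linarith [fpRadius_le hp hp' i, fpRadius_le hp hp' j]

theorem fpBall_subset_Icc {p : ℝ} (hp : 1 < p) (hp' : p ≤ 3 / 2) {k : ℕ} (hk : 0 < k) :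
    fpBall p k ⊆ Icc 0 1 := by
  have hc : (2 : ℝ) ^ (-(k : ℝ)) ≤ 1 / 2 := by
    have hk1 : (1 : ℝ) ≤ k := by exact_mod_cast hk
    simpa [Real.rpow_neg_one] using
      Real.rpow_le_rpow_of_exponent_le one_le_two (neg_le_neg hk1)
  have hr := fpRadius_le hp hp' k
  rw [fpBall_eq_Ioo]
  intro x hx
  constructor <;> linarith [hx.1, hx.2, Real.rpow_pos_of_pos two_pos (-(k : ℝ))]

theorem fpHeight_rpow_mul_two_mul_fpRadius {p : ℝ} (hp : 1 < p) {k : ℕ} (hk : 0 < k) :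
    fpHeight p k ^ p * (2 * fpRadius p k) = 2 ^ (1 - p) / k := by
  have hp1 : p - 1 ≠ 0 := by linarith
  have hk0 : (0 : ℝ) < k := by exact_mod_cast hk
  have hbase : ((2 : ℝ) ^ (k : ℝ) / k) ^ p * (k * 2 ^ (-(p * k))) = (k : ℝ) ^ (-(p - 1)) := by
    rw [Real.div_rpow (by positivity) hk0.le, ← Real.rpow_mul zero_le_two, neg_sub,
      Real.rpow_sub hk0, Real.rpow_one, Real.rpow_neg zero_le_two]
    field_simp
  have hpow : (((2 : ℝ) ^ (k : ℝ) / k) ^ (1 / (p - 1))) ^ p * fpRadius p k = (k : ℝ)⁻¹ := by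
    rw [fpRadius, ← Real.rpow_mul (by positivity), mul_comm (1 / (p - 1)) p,
      Real.rpow_mul (by positivity),
      ← Real.mul_rpow (by positivity) (by positivity), hbase, ← Real.rpow_mul hk0.le,
      neg_mul, mul_one_div_cancel hp1, Real.rpow_neg_one]
  rw [fpHeight, Real.mul_rpow (by norm_num) (by positivity), Real.rpow_sub two_pos, Real.rpow_one,
    Real.div_rpow zero_le_one zero_le_two, Real.one_rpow]
  linear_combination (2 / 2 ^ p) * hpow

theorem ofReal_fpHeight_rpow_mul_volume {p : ℝ} (hp : 1 < p) {k : ℕ} (hk : 0 < k) :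
    ENNReal.ofReal (fpHeight p k) ^ p * volume (fpBall p k) = ENNReal.ofReal (2 ^ (1 - p) / k) := by
  have hheight : 0 ≤ fpHeight p k := by unfold fpHeight; positivity
  rw [fpBall, Real.volume_ball, ENNReal.ofReal_rpow_of_nonneg hheight (by linarith),
    ← ENNReal.ofReal_mul (by positivity), fpHeight_rpow_mul_two_mul_fpRadius hp hk]

theorem fp_not_in_Lp_general (p : ℝ) (hp : 1 < p) (hp' : p ≤ 3 / 2)
    (f : ℝ → ℝ≥0∞)
    (hball : ∀ k : ℕ, 1 ≤ k →
      ∀ x ∈ Ioo ((2:ℝ) ^ (-(k:ℝ)) - ((k:ℝ) * (2:ℝ) ^ (-(p * (k:ℝ)))) ^ (1 / (p - 1)))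
          ((2:ℝ) ^ (-(k:ℝ)) + ((k:ℝ) * (2:ℝ) ^ (-(p * (k:ℝ)))) ^ (1 / (p - 1))),
        f x = ENNReal.ofReal ((1 / 2) * ((2:ℝ) ^ ((k:ℝ)) / (k:ℝ)) ^ (1 / (p - 1)))) :
    ∫⁻ x in Icc (0:ℝ) 1, f x ^ p = ∞ := by
  have hlower := tsum_mul_measure_le_setLIntegral (μ := volume) (f := fun x ↦ f x ^ p)
    (S := fun n : ℕ ↦ fpBall p (n + 1)) (s := Icc 0 1)
    (v := fun n ↦ ENNReal.ofReal (fpHeight p (n + 1)) ^ p)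
    (fun _ ↦ Metric.isOpen_ball.measurableSet)
    ((pairwise_disjoint_fpBall hp hp').comp_of_injective (add_left_injective 1))
    (fun n ↦ fpBall_subset_Icc hp hp' n.succ_pos)
    (fun n x hx ↦ by
      rw [fpBall_eq_Ioo] at hx
      simp only [hball (n + 1) (Nat.le_add_left 1 n) x hx, fpHeight])
  simp_rw [ofReal_fpHeight_rpow_mul_volume hp (Nat.succ_pos _),
    tsum_ofReal_div_natCast_succ_eq_top (Real.rpow_pos_of_pos two_pos _)] at hlower
  exact top_le_iff.mp hlower

/-- The density `f_p`, equal to `(1/2)(2^k/k)^{1/(p-1)}` on the pairwise disjoint balls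
`B(2^{-k}, (k 2^{-pk})^{1/(p-1)})` and zero elsewhere, is not in `L^p`: `∫_0^1 f_p^p = ∞`. -/
theorem fp_not_in_Lp (p : ℝ) (hp : 1 < p) (hp' : p ≤ 3 / 2)
    (f : ℝ → ℝ≥0∞)
    (hball : ∀ k : ℕ, 1 ≤ k →
      ∀ x ∈ Ioo ((2:ℝ) ^ (-(k:ℝ)) - ((k:ℝ) * (2:ℝ) ^ (-(p * (k:ℝ)))) ^ (1 / (p - 1)))
          ((2:ℝ) ^ (-(k:ℝ)) + ((k:ℝ) * (2:ℝ) ^ (-(p * (k:ℝ)))) ^ (1 / (p - 1))),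
        f x = ENNReal.ofReal ((1 / 2) * ((2:ℝ) ^ ((k:ℝ)) / (k:ℝ)) ^ (1 / (p - 1))))
    (hzero : ∀ x : ℝ,
      (∀ k : ℕ, 1 ≤ k →
        x ∉ Ioo ((2:ℝ) ^ (-(k:ℝ)) - ((k:ℝ) * (2:ℝ) ^ (-(p * (k:ℝ)))) ^ (1 / (p - 1)))
          ((2:ℝ) ^ (-(k:ℝ)) + ((k:ℝ) * (2:ℝ) ^ (-(p * (k:ℝ)))) ^ (1 / (p - 1)))) →
      f x = 0) :
    ∫⁻ x in Icc (0:ℝ) 1, f x ^ p = ∞ :=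
  fp_not_in_Lp_general p hp hp' f hball
end

section
/- Suppose μ is a probability measure on [0,1] absolutely continuous with non-increasing density f, f > 0 on (0,1). If there exist C > 0 and s ∈ (0,1) such that μ(B(x,R))/μ(B(x,r)) ≥ C(R/r)^s for all x ∈ [0,1] and 0 < r < R ≤ 1 (i.e. the lower dimension of μ is at least s), then f ∈ L^{p'}([0,1]) for every p' with p'(1 − s) < 1. -/
/-!
Testing the lower-dimension bound on the balls `B(0, y) ⊆ B(0, 1)` gives
`C y^{-s} F(y) ≤ μ[0,1] = 1` for the distribution function `F(y) = ∫_0^y f`. Since `f` is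
non-increasing, `F(y) ≥ y f(y)`, hence `f(y) ≤ C⁻¹ y^{s-1}`, and `f^{p'}` is dominated by a
multiple of `y^{(s-1)p'}`, which is integrable on `(0,1)` exactly when `p'(1-s) < 1`.
-/

open MeasureTheory Set ENNReal

theorem AntitoneOn.ofReal_mul_sub_le_setLIntegral_Ioo {f : ℝ → ℝ} {a b y : ℝ}
    (hf : AntitoneOn f (Ioo a b)) (hy : y ∈ Ioo a b) :
    ENNReal.ofReal (f y * (y - a)) ≤ ∫⁻ t in Ioo a y, ENNReal.ofReal (f t) := by
  rw [ENNReal.ofReal_mul' (sub_nonneg.2 hy.1.le), ← Real.volume_Ioo, ← setLIntegral_const]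
  exact setLIntegral_mono' measurableSet_Ioo fun t ht =>
    ENNReal.ofReal_le_ofReal (hf ⟨ht.1, ht.2.trans hy.2⟩ hy ht.2.le)

theorem le_inv_mul_rpow_sub_one_of_mul_le_one {b C s y : ℝ} (hC : 0 < C) (hy : 0 < y)
    (h : C * (1 / y) ^ s * (b * y) ≤ 1) : b ≤ C⁻¹ * y ^ (s - 1) := by
  have hys : 0 < y ^ s := Real.rpow_pos_of_pos hy s
  rw [one_div, Real.inv_rpow hy.le] at h
  rw [Real.rpow_sub_one hy.ne', ← div_eq_inv_mul, le_div_iff₀ hC, le_div_iff₀ hy]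
  calc b * C * y = C * (y ^ s)⁻¹ * (b * y) * y ^ s := by field_simp
    _ ≤ 1 * y ^ s := by gcongr
    _ = y ^ s := one_mul _

theorem setLIntegral_Ioo_ofReal_const_mul_rpow_ne_top (K : ℝ) {a : ℝ} (ha : -1 < a) :
    ∫⁻ x in Ioo (0 : ℝ) 1, ENNReal.ofReal (K * x ^ a) ≠ ∞ :=
  ((((intervalIntegral.integrableOn_Ioo_rpow_iff one_pos).2 ha).const_mul K).lintegral_lt_top).ne

theorem setLIntegral_Icc_ofReal_rpow_ne_top_of_le_mul_rpow {g : ℝ → ℝ} {K s p : ℝ}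
    (hK : 0 ≤ K) (hg0 : ∀ x ∈ Ioo (0 : ℝ) 1, 0 ≤ g x)
    (hg : ∀ x ∈ Ioo (0 : ℝ) 1, g x ≤ K * x ^ (s - 1)) (hp : 0 ≤ p) (hps : p * (1 - s) < 1) :
    ∫⁻ x in Icc (0 : ℝ) 1, ENNReal.ofReal (g x ^ p) ≠ ∞ := by
  rw [← setLIntegral_congr Ioo_ae_eq_Icc]
  refine ne_top_of_le_ne_top
    (setLIntegral_Ioo_ofReal_const_mul_rpow_ne_top (K ^ p) (a := (s - 1) * p) (by nlinarith))
    (setLIntegral_mono' measurableSet_Ioo fun x hx => ENNReal.ofReal_le_ofReal ?_)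
  calc g x ^ p ≤ (K * x ^ (s - 1)) ^ p := Real.rpow_le_rpow (hg0 x hx) (hg x hx) hp
    _ = K ^ p * x ^ ((s - 1) * p) := by
      rw [Real.mul_rpow hK (Real.rpow_nonneg hx.1.le _), ← Real.rpow_mul hx.1.le]

theorem monotone_density_lower_dim_implies_Lp_general (f : ℝ → ℝ)
    (hmono : AntitoneOn f (Ioo (0:ℝ) 1)) (hfpos : ∀ x ∈ Ioo (0:ℝ) 1, 0 < f x)
    (hprob : ∫⁻ x in Icc (0:ℝ) 1, ENNReal.ofReal (f x) = 1)
    (C s : ℝ) (hC : 0 < C)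
    (hlower : ∀ x ∈ Icc (0:ℝ) 1, ∀ r R : ℝ, 0 < r → r < R → R ≤ 1 →
      ENNReal.ofReal (C * (R / r) ^ s) *
          (∫⁻ y in Ioo (x - r) (x + r) ∩ Icc (0:ℝ) 1, ENNReal.ofReal (f y)) ≤
        ∫⁻ y in Ioo (x - R) (x + R) ∩ Icc (0:ℝ) 1, ENNReal.ofReal (f y)) :
    ∀ p' : ℝ, 1 ≤ p' → p' * (1 - s) < 1 →
      ∫⁻ x in Icc (0:ℝ) 1, ENNReal.ofReal (f x ^ p') ≠ ∞ := by
  intro p' hp1 hps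
  have hdensity : ∀ y ∈ Ioo (0:ℝ) 1, f y ≤ C⁻¹ * y ^ (s - 1) := by
    intro y hy
    have hball : Ioo 0 y ⊆ Ioo (0 - y) (0 + y) ∩ Icc (0:ℝ) 1 := fun t ht =>
      ⟨⟨by linarith [ht.1, hy.1], by linarith [ht.2]⟩, ht.1.le, by linarith [ht.2, hy.2]⟩
    refine le_inv_mul_rpow_sub_one_of_mul_le_one hC hy.1 (ENNReal.ofReal_le_one.1 ?_)
    calc ENNReal.ofReal (C * (1 / y) ^ s * (f y * y))
        = ENNReal.ofReal (C * (1 / y) ^ s) * ENNReal.ofReal (f y * (y - 0)) := by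
          rw [sub_zero, ENNReal.ofReal_mul (by have := hy.1; positivity)]
      _ ≤ ENNReal.ofReal (C * (1 / y) ^ s) *
          ∫⁻ t in Ioo (0 - y) (0 + y) ∩ Icc (0:ℝ) 1, ENNReal.ofReal (f t) := by
          gcongr
          exact (hmono.ofReal_mul_sub_le_setLIntegral_Ioo hy).trans (lintegral_mono_set hball)
      _ ≤ ∫⁻ t in Ioo (0 - 1) (0 + 1) ∩ Icc (0:ℝ) 1, ENNReal.ofReal (f t) :=
          hlower 0 (left_mem_Icc.2 zero_le_one) y 1 hy.1 hy.2 le_rfl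
      _ ≤ 1 := hprob ▸ lintegral_mono_set inter_subset_right
  exact setLIntegral_Icc_ofReal_rpow_ne_top_of_le_mul_rpow (inv_nonneg.2 hC.le)
    (fun x hx => (hfpos x hx).le) hdensity (by linarith) hps

/-- If a probability measure on `[0,1]` with non-increasing positive density `f` has
lower dimension at least `s` (in the sense of a uniform lower bound on ratios of
measures of concentric balls), then `f ∈ L^{p'}` whenever `p'(1 - s) < 1`. -/
theorem monotone_density_lower_dim_implies_Lp (f : ℝ → ℝ)
    (hmono : AntitoneOn f (Ioo (0:ℝ) 1)) (hfpos : ∀ x ∈ Ioo (0:ℝ) 1, 0 < f x)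
    (hprob : ∫⁻ x in Icc (0:ℝ) 1, ENNReal.ofReal (f x) = 1)
    (C s : ℝ) (hC : 0 < C) (hs0 : 0 < s) (hs1 : s < 1)
    (hlower : ∀ x ∈ Icc (0:ℝ) 1, ∀ r R : ℝ, 0 < r → r < R → R ≤ 1 →
      ENNReal.ofReal (C * (R / r) ^ s) *
          (∫⁻ y in Ioo (x - r) (x + r) ∩ Icc (0:ℝ) 1, ENNReal.ofReal (f y)) ≤
        ∫⁻ y in Ioo (x - R) (x + R) ∩ Icc (0:ℝ) 1, ENNReal.ofReal (f y)) :
    ∀ p' : ℝ, 1 ≤ p' → p' * (1 - s) < 1 →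
      ∫⁻ x in Icc (0:ℝ) 1, ENNReal.ofReal (f x ^ p') ≠ ∞ :=
  monotone_density_lower_dim_implies_Lp_general f hmono hfpos hprob C s hC hlower
end

section
/- Let ν be a measure on a compact set X ⊆ ℝ^d and s ≥ t ≥ 0 with c₁ r^s ≤ ν(B(x,r)) ≤ c₂ r^t for all x ∈ X and 0 < r < 1. Let μ be absolutely continuous with respect to ν with density f satisfying ∫_X f^{p1} dν < ∞ and ∫_X f^{−p2} dν < ∞ for p1, p2 ∈ [1,∞), f > 0 ν-a.e. Then there is a constant c > 0 such that for all x ∈ X and 0 < r ≤ R < 1, μ(B(x,R))/μ(B(x,r)) ≤ c · R^{t(1−1/p1)} / r^{s(1+1/p2)}. -/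
/-!
Hölder's inequality against the constant function `1` gives
`μ(B(x,R)) ≤ ‖f‖_{p₁} ν(B(x,R))^{1-1/p₁}`. Hölder's inequality with exponents `(p₂+1)/p₂` and
`p₂+1`, applied to the product `f^{p₂/(p₂+1)} · f^{-p₂/(p₂+1)} = 1`, gives the reverse bound
`ν(B(x,r))^{1+1/p₂} ≤ μ(B(x,r)) ‖1/f‖_{p₂}`. Dividing the two and inserting the bounds
`c₁ r^s ≤ ν(B(x,r)) ≤ c₂ r^t` yields the estimate.
-/

open MeasureTheory Set ENNReal Metric

section
variable {α : Type*} [MeasurableSpace α] {μ : Measure α} {f : α → ℝ≥0∞}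

theorem ae_ne_top_of_lintegral_rpow_ne_top {p : ℝ} (hp : 0 < p) (hf : AEMeasurable f μ)
    (h : ∫⁻ x, f x ^ p ∂μ ≠ ∞) : ∀ᵐ x ∂μ, f x ≠ ∞ := by
  filter_upwards [ae_lt_top' (hf.pow_const p) h] with x hx hx_top
  simp [hx_top, hp] at hx

theorem lintegral_le_rpow_lintegral_rpow_mul_measure_univ {p : ℝ} (hp : 1 ≤ p)
    (hf : AEMeasurable f μ) :
    ∫⁻ x, f x ∂μ ≤ (∫⁻ x, f x ^ p ∂μ) ^ (1 / p) * μ univ ^ (1 - 1 / p) := by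
  simpa [eLpNorm'] using
    eLpNorm'_le_eLpNorm'_mul_rpow_measure_univ one_pos hp hf.aestronglyMeasurable

theorem measure_univ_rpow_le_lintegral_mul_rpow_lintegral_rpow_neg {p : ℝ} (hp : 0 < p)
    (hf : AEMeasurable f μ) (hf0 : ∀ᵐ x ∂μ, f x ≠ 0) (hf_top : ∀ᵐ x ∂μ, f x ≠ ∞) :
    μ univ ^ (1 + 1 / p) ≤ (∫⁻ x, f x ∂μ) * (∫⁻ x, f x ^ (-p) ∂μ) ^ (1 / p) := by
  have hsum : p / (p + 1) + 1 / (p + 1) = 1 := by field_simp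
  have hcancel_exp : p / (p + 1) + -p * (1 / (p + 1)) = 0 := by ring
  have hcancel : ∀ᵐ x ∂μ, f x ^ (p / (p + 1)) * (f x ^ (-p)) ^ (1 / (p + 1)) = 1 := by
    filter_upwards [hf0, hf_top] with x hx0 hx_top
    rw [← ENNReal.rpow_mul, ← ENNReal.rpow_add _ _ hx0 hx_top, hcancel_exp, ENNReal.rpow_zero]
  have holder : μ univ ≤
      (∫⁻ x, f x ∂μ) ^ (p / (p + 1)) * (∫⁻ x, f x ^ (-p) ∂μ) ^ (1 / (p + 1)) := by
    calc μ univ = ∫⁻ x, f x ^ (p / (p + 1)) * (f x ^ (-p)) ^ (1 / (p + 1)) ∂μ := by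
          rw [lintegral_congr_ae hcancel, lintegral_one]
      _ ≤ _ := lintegral_mul_norm_pow_le hf (hf.pow_const _) (by positivity) (by positivity) hsum
  have hexp₁ : p / (p + 1) * (1 + 1 / p) = 1 := by field_simp
  have hexp₂ : 1 / (p + 1) * (1 + 1 / p) = 1 / p := by field_simp
  calc μ univ ^ (1 + 1 / p)
      ≤ ((∫⁻ x, f x ∂μ) ^ (p / (p + 1)) * (∫⁻ x, f x ^ (-p) ∂μ) ^ (1 / (p + 1))) ^ (1 + 1 / p) := by
        gcongr
    _ = (∫⁻ x, f x ∂μ) * (∫⁻ x, f x ^ (-p) ∂μ) ^ (1 / p) := by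
      rw [ENNReal.mul_rpow_of_nonneg _ _ (by positivity), ← ENNReal.rpow_mul, ← ENNReal.rpow_mul,
        hexp₁, hexp₂, ENNReal.rpow_one]

theorem setLIntegral_div_setLIntegral_le {X S T : Set α} {p q : ℝ} (hp : 1 ≤ p) (hq : 0 < q)
    (hf : AEMeasurable f (μ.restrict X)) (hf0 : ∀ᵐ x ∂μ.restrict X, f x ≠ 0)
    (hf_top : ∀ᵐ x ∂μ.restrict X, f x ≠ ∞) (hS : S ⊆ X) (hT : T ⊆ X) (hT0 : μ T ≠ 0)
    (hq_int : ∫⁻ x in X, f x ^ (-q) ∂μ ≠ ∞) :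
    (∫⁻ x in S, f x ∂μ) / (∫⁻ x in T, f x ∂μ) ≤
      (∫⁻ x in X, f x ^ p ∂μ) ^ (1 / p) * (∫⁻ x in X, f x ^ (-q) ∂μ) ^ (1 / q) *
        μ S ^ (1 - 1 / p) / μ T ^ (1 + 1 / q) := by
  have upper : ∫⁻ x in S, f x ∂μ ≤ (∫⁻ x in X, f x ^ p ∂μ) ^ (1 / p) * μ S ^ (1 - 1 / p) := by
    calc ∫⁻ x in S, f x ∂μ ≤ (∫⁻ x in S, f x ^ p ∂μ) ^ (1 / p) * μ S ^ (1 - 1 / p) := by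
          simpa using lintegral_le_rpow_lintegral_rpow_mul_measure_univ hp
            (hf.mono_measure (Measure.restrict_mono hS le_rfl))
      _ ≤ _ := by gcongr
  have lower : μ T ^ (1 + 1 / q) ≤
      (∫⁻ x in T, f x ∂μ) * (∫⁻ x in X, f x ^ (-q) ∂μ) ^ (1 / q) := by
    calc μ T ^ (1 + 1 / q) ≤ (∫⁻ x in T, f x ∂μ) * (∫⁻ x in T, f x ^ (-q) ∂μ) ^ (1 / q) := by
          simpa using measure_univ_rpow_le_lintegral_mul_rpow_lintegral_rpow_neg hq
            (hf.mono_measure (Measure.restrict_mono hT le_rfl))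
            (ae_restrict_of_ae_restrict_of_subset hT hf0)
            (ae_restrict_of_ae_restrict_of_subset hT hf_top)
      _ ≤ _ := by gcongr
  have hT0' : μ T ^ (1 + 1 / q) ≠ 0 := by positivity
  have hq_int' : (∫⁻ x in X, f x ^ (-q) ∂μ) ^ (1 / q) ≠ ∞ := by finiteness
  calc (∫⁻ x in S, f x ∂μ) / (∫⁻ x in T, f x ∂μ)
      ≤ (∫⁻ x in S, f x ∂μ) / (μ T ^ (1 + 1 / q) / (∫⁻ x in X, f x ^ (-q) ∂μ) ^ (1 / q)) :=
        ENNReal.div_le_div_left (ENNReal.div_le_of_le_mul lower) _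
    _ = (∫⁻ x in S, f x ∂μ) * (∫⁻ x in X, f x ^ (-q) ∂μ) ^ (1 / q) / μ T ^ (1 + 1 / q) := by
        rw [div_eq_mul_inv, ENNReal.inv_div (Or.inl hq_int') (Or.inr hT0'), mul_div_assoc]
    _ ≤ _ := by
        grw [upper]
        rw [mul_right_comm]

end

theorem general_reference_measure_bound_general (d : ℕ)
    (ν : Measure (EuclideanSpace ℝ (Fin d)))
    (X : Set (EuclideanSpace ℝ (Fin d)))
    (s t c1 c2 : ℝ) (hc1 : 0 < c1) (hc2 : 0 < c2)
    (hν : ∀ x ∈ X, ∀ r : ℝ, 0 < r → r < 1 →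
      ENNReal.ofReal (c1 * r ^ s) ≤ ν (closedBall x r ∩ X) ∧
      ν (closedBall x r ∩ X) ≤ ENNReal.ofReal (c2 * r ^ t))
    (f : EuclideanSpace ℝ (Fin d) → ℝ≥0∞) (hf : Measurable f)
    (hpos : ∀ᵐ x ∂(ν.restrict X), 0 < f x)
    (p1 p2 : ℝ) (hp1 : 1 ≤ p1) (hp2 : 1 ≤ p2)
    (hLp1 : ∫⁻ x in X, f x ^ p1 ∂ν ≠ ∞)
    (hLp2 : ∫⁻ x in X, f x ^ (-p2) ∂ν ≠ ∞) :
    ∃ c : ℝ, 0 < c ∧ ∀ x ∈ X, ∀ r R : ℝ, 0 < r → r ≤ R → R < 1 →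
      (∫⁻ y in closedBall x R ∩ X, f y ∂ν) / (∫⁻ y in closedBall x r ∩ X, f y ∂ν) ≤
        ENNReal.ofReal (c * R ^ (t * (1 - 1 / p1)) / r ^ (s * (1 + 1 / p2))) := by
  set C := (∫⁻ x in X, f x ^ p1 ∂ν) ^ (1 / p1) * (∫⁻ x in X, f x ^ (-p2) ∂ν) ^ (1 / p2)
  have hC : C ≠ ∞ := by finiteness
  -- `+ 1` keeps the constant positive even when `C = 0`.
  set K := C.toReal + 1
  refine ⟨K * c2 ^ (1 - 1 / p1) / c1 ^ (1 + 1 / p2), by positivity, ?_⟩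
  intro x hx r R hr hrR hR1
  have hR : 0 < R := hr.trans_le hrR
  have hr_lower := (hν x hx r hr (hrR.trans_lt hR1)).1
  have hR_upper := (hν x hx R hR hR1).2
  have hf_top := ae_ne_top_of_lintegral_rpow_ne_top (by linarith) hf.aemeasurable hLp1
  have hr0 : ν (closedBall x r ∩ X) ≠ 0 := ((ENNReal.ofReal_pos.2 (by positivity)).trans_le hr_lower).ne'
  have hCK : C ≤ ENNReal.ofReal K :=
    (ENNReal.le_ofReal_iff_toReal_le hC (by positivity)).2 (by linarith)
  have h1p1 : 0 ≤ 1 - 1 / p1 := by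
    rw [sub_nonneg, div_le_one (by linarith)]; exact hp1
  calc _ ≤ C * ν (closedBall x R ∩ X) ^ (1 - 1 / p1) / ν (closedBall x r ∩ X) ^ (1 + 1 / p2) :=
        setLIntegral_div_setLIntegral_le hp1 (by linarith) hf.aemeasurable
          (hpos.mono fun _ h => h.ne') hf_top inter_subset_right inter_subset_right hr0 hLp2
    _ ≤ ENNReal.ofReal K * ENNReal.ofReal (c2 * R ^ t) ^ (1 - 1 / p1) /
          ENNReal.ofReal (c1 * r ^ s) ^ (1 + 1 / p2) := by
        gcongr
    _ = _ := by
        rw [ENNReal.ofReal_rpow_of_pos (by positivity), ENNReal.ofReal_rpow_of_pos (by positivity),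
          ← ENNReal.ofReal_mul (by positivity), ← ENNReal.ofReal_div_of_pos (by positivity),
          Real.mul_rpow hc2.le (by positivity), Real.mul_rpow hc1.le (by positivity),
          ← Real.rpow_mul hR.le, ← Real.rpow_mul hr.le]
        congr 1
        field_simp

/-- General reference measure version: if `ν` satisfies `c₁ r^s ≤ ν(B(x,r)) ≤ c₂ r^t` on
a compact `X ⊆ ℝ^d` and `μ` has density `f` with respect to `ν` with `f ∈ L^{p1}(ν)` and
`1/f ∈ L^{p2}(ν)`, then `μ(B(x,R))/μ(B(x,r)) ≤ c · R^{t(1-1/p1)} / r^{s(1+1/p2)}`. -/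
theorem general_reference_measure_bound (d : ℕ)
    (ν : Measure (EuclideanSpace ℝ (Fin d)))
    (X : Set (EuclideanSpace ℝ (Fin d))) (hX : IsCompact X) (hXne : X.Nonempty)
    (s t c1 c2 : ℝ) (hts : 0 ≤ t) (hst : t ≤ s) (hc1 : 0 < c1) (hc2 : 0 < c2)
    (hν : ∀ x ∈ X, ∀ r : ℝ, 0 < r → r < 1 →
      ENNReal.ofReal (c1 * r ^ s) ≤ ν (closedBall x r ∩ X) ∧
      ν (closedBall x r ∩ X) ≤ ENNReal.ofReal (c2 * r ^ t))
    (f : EuclideanSpace ℝ (Fin d) → ℝ≥0∞) (hf : Measurable f)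
    (hpos : ∀ᵐ x ∂(ν.restrict X), 0 < f x)
    (p1 p2 : ℝ) (hp1 : 1 ≤ p1) (hp2 : 1 ≤ p2)
    (hLp1 : ∫⁻ x in X, f x ^ p1 ∂ν ≠ ∞)
    (hLp2 : ∫⁻ x in X, f x ^ (-p2) ∂ν ≠ ∞) :
    ∃ c : ℝ, 0 < c ∧ ∀ x ∈ X, ∀ r R : ℝ, 0 < r → r ≤ R → R < 1 →
      (∫⁻ y in closedBall x R ∩ X, f y ∂ν) / (∫⁻ y in closedBall x r ∩ X, f y ∂ν) ≤
        ENNReal.ofReal (c * R ^ (t * (1 - 1 / p1)) / r ^ (s * (1 + 1 / p2))) :=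
  general_reference_measure_bound_general d ν X s t c1 c2 hc1 hc2 hν f hf hpos p1 p2 hp1 hp2 hLp1
    hLp2
end
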